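/- There exists a unique ℂ-algebra homomorphism α : Cl_n → Cl_n ⊗_ℂ F(Ω_n) satisfying α(s_i) = s_i ⊗ ε_i for every i ∈ {1,…,n}. This homomorphism satisfies α(s_A) = s_A ⊗ w_A for every subset A of {1,…,n}, it is injective, and its fixed-point subalgebra is trivial: {x ∈ Cl_n : α(x) = x ⊗ 1} = ℂ·1 (ergodicity of the action of the discrete hypercube on the fermion algebra). -/

import Mathlib

open Finset TensorProduct

/-- The generator `s_i = ι(e_i)` of the Clifford algebra of a quadratic form `Q` on `ℂ^n`. -/
noncomputable def sGen {n : ℕ} (Q : QuadraticForm ℂ (Fin n → ℂ)) (i : Fin n) :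
    CliffordAlgebra Q :=
  CliffordAlgebra.ι Q (Pi.single i 1)

/-- For a subset `A = {i₁ < … < i_k}` of `{1,…,n}`, the element
`s_A = s_{i₁} ⋯ s_{i_k}` of the Clifford algebra, with `s_∅ = 1`. -/
noncomputable def sSet {n : ℕ} (Q : QuadraticForm ℂ (Fin n → ℂ)) (A : Finset (Fin n)) :
    CliffordAlgebra Q :=
  ((A.sort (· ≤ ·)).map (sGen Q)).prod

/-!
The cube `Ω = {±1}ⁿ` acts on `ℂⁿ` by coordinatewise sign changes, which preserve `∑ xᵢ²`, hence on
`Cl_n` by algebra automorphisms `ρ_ω` with `ρ_ω(s_i) = ωᵢ s_i`. Identifying `Cl_n ⊗ F(Ω)` with the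
functions `Ω → Cl_n`, the map `α` is `x ↦ (ω ↦ ρ_ω x)`; it is injective because `ρ_1 = id`.
A fixed point `x` of `α` is fixed by every `ρ_ω`, so it equals the average of the `ρ_ω x`.
Averaging a monomial `s_{i₁} ⋯ s_{i_k}` multiplies it by `∏ᵢ (1 + (-1)^{kᵢ})/2`, where `kᵢ` is
the multiplicity of `i`: this vanishes unless every `kᵢ` is even, and then the monomial is a
scalar, since the `s_i` anticommute and square to scalars.
-/

variable {n : ℕ} {Q : QuadraticForm ℂ (Fin n → ℂ)}

theorem ι_eq_sum_smul_sGen (v : Fin n → ℂ) :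
    CliffordAlgebra.ι Q v = ∑ i, v i • sGen Q i := by
  simp_rw [sGen, ← map_smul, ← map_sum, ← Pi.single_smul', smul_eq_mul, mul_one,
    Finset.univ_sum_single]

theorem algHom_ext_sGen {B : Type*} [Semiring B] [Algebra ℂ B]
    {f g : CliffordAlgebra Q →ₐ[ℂ] B} (h : ∀ i, f (sGen Q i) = g (sGen Q i)) : f = g :=
  CliffordAlgebra.hom_ext <| (Pi.basisFun ℂ (Fin n)).ext fun i => by simpa [sGen] using h i

theorem adjoin_range_sGen : Algebra.adjoin ℂ (Set.range (sGen Q)) = ⊤ := by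
  rw [eq_top_iff, ← CliffordAlgebra.adjoin_range_ι, Algebra.adjoin_le_iff]
  rintro _ ⟨v, rfl⟩
  rw [ι_eq_sum_smul_sGen]
  exact Subalgebra.sum_mem _ fun i _ =>
    Subalgebra.smul_mem _ (Algebra.subset_adjoin (Set.mem_range_self i)) _

theorem span_list_prod_sGen_eq_top :
    Submodule.span ℂ (Set.range fun l : List (Fin n) => (l.map (sGen Q)).prod) = ⊤ := by
  have h := Algebra.adjoin_eq_span ℂ (Set.range (sGen Q))
  rw [adjoin_range_sGen, ← FreeMonoid.mrange_lift, Algebra.top_toSubmodule] at h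
  rw [h, MonoidHom.coe_mrange, ← FreeMonoid.toList.symm.surjective.range_comp]
  simp only [Function.comp_def, FreeMonoid.lift_apply, FreeMonoid.toList_symm,
    FreeMonoid.toList_ofList]

theorem Pi.smul_single_eq_single_smul {I α β : Type*} [DecidableEq I] [Zero β]
    [SMulZeroClass α β] (f : I → α) (i : I) (x : β) :
    f • (Pi.single i x : I → β) = Pi.single i (f i • x) :=
  funext fun j => by rcases eq_or_ne j i with rfl | h <;> simp [*]

theorem sum_int_units_pow_eq_zero_of_odd {k : ℕ} (hk : Odd k) :
    ∑ u : ℤˣ, ((u : ℤ) : ℂ) ^ k = 0 := by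
  rw [show (univ : Finset ℤˣ) = {1, -1} by decide]
  simp [hk.neg_pow]

theorem sum_int_units_list_prod_eq_zero_of_odd {ι : Type*} [Fintype ι] [DecidableEq ι]
    {l : List ι} {i : ι} (hi : Odd (l.count i)) :
    ∑ ω : ι → ℤˣ, (l.map fun j => ((ω j : ℤ) : ℂ)).prod = 0 := by
  have hl (ω : ι → ℤˣ) :
      (l.map fun j => ((ω j : ℤ) : ℂ)).prod = ∏ j, ((ω j : ℤ) : ℂ) ^ l.count j := by
    rw [prod_list_map_count]
    exact prod_subset (subset_univ _) fun j _ hj => by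
      rw [List.count_eq_zero_of_not_mem (by simpa using hj), pow_zero]
  rw [Finset.sum_congr rfl fun ω _ => hl ω,
    ← Fintype.prod_sum fun j (u : ℤˣ) => ((u : ℤ) : ℂ) ^ l.count j]
  exact prod_eq_zero (mem_univ i) (sum_int_units_pow_eq_zero_of_odd hi)

def IsSignInvariant (Q : QuadraticForm ℂ (Fin n → ℂ)) : Prop :=
  ∀ (ω : Fin n → ℤˣ) (v : Fin n → ℂ), Q (ω • v) = Q v

theorem polar_single_single_eq_zero (hQ : IsSignInvariant Q) {i j : Fin n} (hij : i ≠ j) :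
    QuadraticMap.polar Q (Pi.single i 1) (Pi.single j 1) = 0 := by
  -- flipping the sign of the `i`-th coordinate negates the polar form
  obtain ⟨ω, hωi, hωj⟩ : ∃ ω : Fin n → ℤˣ, ω i = -1 ∧ ω j = 1 :=
    ⟨Function.update 1 i (-1), by simp [Function.update_of_ne hij.symm]⟩
  have h : QuadraticMap.polar Q (ω • Pi.single i 1) (ω • Pi.single j 1)
      = QuadraticMap.polar Q (Pi.single i 1) (Pi.single j 1) := by
    simp only [QuadraticMap.polar, ← smul_add, hQ ω]
  rw [Pi.smul_single_eq_single_smul, Pi.smul_single_eq_single_smul, hωi, hωj, one_smul,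
    Units.neg_smul, one_smul, Pi.single_neg, QuadraticMap.polar_neg_left] at h
  linear_combination (-1 / 2 : ℂ) * h

theorem sGen_mul_sGen_of_ne (hQ : IsSignInvariant Q) {i j : Fin n} (hij : i ≠ j) :
    sGen Q i * sGen Q j = -(sGen Q j * sGen Q i) := by
  have h := CliffordAlgebra.ι_mul_ι_add_swap (Q := Q) (Pi.single i 1) (Pi.single j 1)
  rw [polar_single_single_eq_zero hQ hij, map_zero] at h
  exact eq_neg_of_add_eq_zero_left h

theorem exists_sGen_mul_list_prod (hQ : IsSignInvariant Q) (i : Fin n) (u : List (Fin n)) :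
    ∃ c : ℂ, sGen Q i * (u.map (sGen Q)).prod = c • ((u.map (sGen Q)).prod * sGen Q i) := by
  induction u with
  | nil => exact ⟨1, by simp⟩
  | cons j u ih =>
    obtain ⟨c, hc⟩ := ih
    obtain ⟨d, hd⟩ : ∃ d : ℂ, sGen Q i * sGen Q j = d • (sGen Q j * sGen Q i) := by
      rcases eq_or_ne i j with rfl | hij
      · exact ⟨1, (one_smul _ _).symm⟩
      · exact ⟨-1, by rw [sGen_mul_sGen_of_ne hQ hij, neg_one_smul]⟩
    refine ⟨d * c, ?_⟩
    simp only [List.map_cons, List.prod_cons]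
    calc sGen Q i * (sGen Q j * (u.map (sGen Q)).prod)
        = d • (sGen Q j * (sGen Q i * (u.map (sGen Q)).prod)) := by
          rw [← mul_assoc, hd, smul_mul_assoc, mul_assoc]
      _ = (d * c) • (sGen Q j * (u.map (sGen Q)).prod * sGen Q i) := by
          rw [hc, mul_smul_comm, smul_smul, mul_assoc]

theorem list_prod_sGen_mem_bot_of_even (hQ : IsSignInvariant Q) (l : List (Fin n))
    (hl : ∀ i, Even (l.count i)) :
    (l.map (sGen Q)).prod ∈ (⊥ : Subalgebra ℂ (CliffordAlgebra Q)) := by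
  match l with
  | [] => exact one_mem _
  | i :: t =>
    have hi : i ∈ t := by
      by_contra h
      simpa [List.count_eq_zero_of_not_mem h] using hl i
    -- move the second occurrence of `s_i` next to the first, where `s_i² = Q eᵢ` is a scalar
    obtain ⟨u, v, rfl⟩ := List.append_of_mem hi
    obtain ⟨c, hc⟩ := exists_sGen_mul_list_prod hQ i u
    have huv : ((u ++ v).map (sGen Q)).prod ∈ (⊥ : Subalgebra ℂ (CliffordAlgebra Q)) :=
      list_prod_sGen_mem_bot_of_even hQ (u ++ v) fun j => by
        have hj := hl j
        rcases eq_or_ne j i with rfl | hji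
        · simp only [List.count_cons_self, List.count_append] at hj ⊢
          rw [Nat.even_iff] at hj ⊢
          omega
        · simp_all [List.count_cons_of_ne hji.symm]
    have hsq : sGen Q i * sGen Q i = algebraMap ℂ _ (Q (Pi.single i 1)) :=
      CliffordAlgebra.ι_sq_scalar Q _
    have key : ((i :: (u ++ i :: v)).map (sGen Q)).prod
        = (c * Q (Pi.single i 1)) • ((u ++ v).map (sGen Q)).prod := calc
      _ = sGen Q i * (u.map (sGen Q)).prod * sGen Q i * (v.map (sGen Q)).prod := by
        simp [mul_assoc]
      _ = c • ((u.map (sGen Q)).prod * (sGen Q i * sGen Q i) * (v.map (sGen Q)).prod) := by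
        rw [hc, smul_mul_assoc, smul_mul_assoc, mul_assoc _ (sGen Q i) (sGen Q i)]
      _ = _ := by
        rw [hsq, Algebra.algebraMap_eq_smul_one, mul_smul_comm, mul_one, smul_mul_assoc,
          smul_smul, List.map_append, List.prod_append]
    rw [key]
    exact Subalgebra.smul_mem _ huv _
termination_by l.length

section SignFlip

variable (hQ : IsSignInvariant Q)

noncomputable def signFlipIsometry (ω : Fin n → ℤˣ) : Q →qᵢ Q where
  toFun v := ω • v
  map_add' := smul_add ω
  map_smul' c v := funext fun i => smul_comm (ω i) c (v i)
  map_app' := hQ ω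

noncomputable def signFlip (ω : Fin n → ℤˣ) : CliffordAlgebra Q →ₐ[ℂ] CliffordAlgebra Q :=
  CliffordAlgebra.map (signFlipIsometry hQ ω)

theorem signFlip_sGen (ω : Fin n → ℤˣ) (i : Fin n) :
    signFlip hQ ω (sGen Q i) = ((ω i : ℤ) : ℂ) • sGen Q i := by
  rw [signFlip, sGen, CliffordAlgebra.map_apply_ι]
  change CliffordAlgebra.ι Q (ω • Pi.single i 1) = _
  rw [Pi.smul_single_eq_single_smul, ← map_smul, ← Pi.single_smul', Units.smul_def,
    zsmul_eq_mul, smul_eq_mul]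

theorem signFlip_one : signFlip hQ 1 = AlgHom.id ℂ (CliffordAlgebra Q) :=
  algHom_ext_sGen fun i => by simp [signFlip_sGen]

theorem signFlip_list_prod (ω : Fin n → ℤˣ) (l : List (Fin n)) :
    signFlip hQ ω (l.map (sGen Q)).prod
      = (l.map fun i => ((ω i : ℤ) : ℂ)).prod • (l.map (sGen Q)).prod := by
  induction l with
  | nil => simp
  | cons i l ih =>
    simp only [List.map_cons, List.prod_cons, map_mul, signFlip_sGen, ih, smul_mul_smul_comm]

theorem sum_signFlip_mem_bot (x : CliffordAlgebra Q) :
    ∑ ω, signFlip hQ ω x ∈ (⊥ : Subalgebra ℂ (CliffordAlgebra Q)) := by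
  have hx : x ∈ Submodule.span ℂ (Set.range fun l : List (Fin n) => (l.map (sGen Q)).prod) :=
    span_list_prod_sGen_eq_top (Q := Q) ▸ Submodule.mem_top
  induction hx using Submodule.span_induction with
  | mem _ h =>
    obtain ⟨l, rfl⟩ := h
    simp only [signFlip_list_prod, ← Finset.sum_smul]
    by_cases hl : ∀ i, Even (l.count i)
    · exact Subalgebra.smul_mem _ (list_prod_sGen_mem_bot_of_even hQ l hl) _
    · obtain ⟨i, hi⟩ := not_forall.1 hl
      rw [sum_int_units_list_prod_eq_zero_of_odd (Nat.not_even_iff_odd.1 hi), zero_smul]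
      exact zero_mem _
  | zero => simp
  | add x y _ _ hx hy => simpa [Finset.sum_add_distrib] using add_mem hx hy
  | smul c x _ hx => simpa [← Finset.smul_sum] using Subalgebra.smul_mem _ hx c

noncomputable def signCoaction :
    CliffordAlgebra Q →ₐ[ℂ] CliffordAlgebra Q ⊗[ℂ] ((Fin n → ℤˣ) → ℂ) :=
  (Algebra.TensorProduct.piScalarRight ℂ ℂ (CliffordAlgebra Q) (Fin n → ℤˣ)).symm.toAlgHom.comp
    (AlgHom.pi (signFlip hQ))

theorem piScalarRight_signCoaction (x : CliffordAlgebra Q) :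
    Algebra.TensorProduct.piScalarRight ℂ ℂ (CliffordAlgebra Q) (Fin n → ℤˣ) (signCoaction hQ x)
      = fun ω => signFlip hQ ω x := by
  funext ω
  simp [signCoaction]

theorem signCoaction_eq_tmul_iff {x y : CliffordAlgebra Q} {f : (Fin n → ℤˣ) → ℂ} :
    signCoaction hQ x = y ⊗ₜ f ↔ ∀ ω, signFlip hQ ω x = f ω • y := by
  rw [← (Algebra.TensorProduct.piScalarRight ℂ ℂ _ _).injective.eq_iff,
    piScalarRight_signCoaction, Algebra.TensorProduct.piScalarRight_tmul, funext_iff]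

theorem signCoaction_sGen (i : Fin n) :
    signCoaction hQ (sGen Q i) = sGen Q i ⊗ₜ fun ω => ((ω i : ℤ) : ℂ) :=
  signCoaction_eq_tmul_iff hQ |>.2 fun ω => signFlip_sGen hQ ω i

theorem signCoaction_sSet (A : Finset (Fin n)) :
    signCoaction hQ (sSet Q A) = sSet Q A ⊗ₜ fun ω => ∏ i ∈ A, ((ω i : ℤ) : ℂ) := by
  refine signCoaction_eq_tmul_iff hQ |>.2 fun ω => ?_
  rw [sSet, signFlip_list_prod, ((A.sort_perm_toList _).map _).prod_eq, prod_map_toList]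

theorem signCoaction_injective : Function.Injective (signCoaction hQ) := fun x y h => by
  have h1 := congrArg
    (fun z => Algebra.TensorProduct.piScalarRight ℂ ℂ (CliffordAlgebra Q) (Fin n → ℤˣ) z 1) h
  simpa only [piScalarRight_signCoaction, signFlip_one, AlgHom.id_apply] using h1

theorem signCoaction_eq_tmul_one_iff {x : CliffordAlgebra Q} :
    signCoaction hQ x = x ⊗ₜ 1 ↔ x ∈ (⊥ : Subalgebra ℂ (CliffordAlgebra Q)) := by
  simp only [signCoaction_eq_tmul_iff, Pi.one_apply, one_smul]
  refine ⟨fun hx => ?_, fun hx ω => ?_⟩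
  · have hcard : (Fintype.card (Fin n → ℤˣ) : ℂ) ≠ 0 := Nat.cast_ne_zero.2 Fintype.card_ne_zero
    have hsum : ∑ ω, signFlip hQ ω x = (Fintype.card (Fin n → ℤˣ) : ℂ) • x := by
      rw [Finset.sum_congr rfl fun ω _ => hx ω, Finset.sum_const, Finset.card_univ,
        Nat.cast_smul_eq_nsmul]
    simpa [hsum, smul_smul, hcard] using
      Subalgebra.smul_mem _ (sum_signFlip_mem_bot hQ x) (Fintype.card (Fin n → ℤˣ) : ℂ)⁻¹
  · obtain ⟨c, rfl⟩ := Algebra.mem_bot.1 hx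
    exact AlgHom.commutes _ c

end SignFlip

/-- There is a unique `ℂ`-algebra homomorphism `α : Cl_n → Cl_n ⊗[ℂ] F(Ω_n)` with
`α(s_i) = s_i ⊗ ε_i` for all `i`, where `F(Ω_n)` is the algebra of all functions
`Ω_n = {-1,1}^n → ℂ` (here `Ω_n` is modeled as `Fin n → ℤˣ`) and `ε_i` is the `i`-th
coordinate function. Moreover any such `α` satisfies `α(s_A) = s_A ⊗ w_A` for all
`A ⊆ {1,…,n}` (where `w_A = ∏_{i∈A} ε_i` is the Walsh function), is injective, and
its fixed-point subalgebra `{x : α(x) = x ⊗ 1}` is `ℂ·1` (ergodicity). -/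
theorem stmt_9 (n : ℕ) (Q : QuadraticForm ℂ (Fin n → ℂ))
    (hQ : ∀ x : Fin n → ℂ, Q x = ∑ i : Fin n, x i ^ 2) :
    (∃! α : CliffordAlgebra Q →ₐ[ℂ] (CliffordAlgebra Q ⊗[ℂ] ((Fin n → ℤˣ) → ℂ)),
      ∀ i : Fin n, α (sGen Q i) = sGen Q i ⊗ₜ[ℂ] (fun ε : Fin n → ℤˣ => ((ε i : ℤ) : ℂ))) ∧
    (∀ α : CliffordAlgebra Q →ₐ[ℂ] (CliffordAlgebra Q ⊗[ℂ] ((Fin n → ℤˣ) → ℂ)),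
      (∀ i : Fin n, α (sGen Q i) = sGen Q i ⊗ₜ[ℂ] (fun ε : Fin n → ℤˣ => ((ε i : ℤ) : ℂ))) →
      (∀ A : Finset (Fin n),
        α (sSet Q A) = sSet Q A ⊗ₜ[ℂ] (fun ε : Fin n → ℤˣ => ∏ i ∈ A, ((ε i : ℤ) : ℂ))) ∧
      Function.Injective α ∧
      (∀ x : CliffordAlgebra Q,
        α x = x ⊗ₜ[ℂ] (1 : (Fin n → ℤˣ) → ℂ) ↔
          ∃ c : ℂ, x = algebraMap ℂ (CliffordAlgebra Q) c)) := by
  have hQ' : IsSignInvariant Q := fun ω v => by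
    simp only [hQ, Pi.smul_apply', smul_pow, Int.units_sq, one_smul]
  have hunique (α : CliffordAlgebra Q →ₐ[ℂ] (CliffordAlgebra Q ⊗[ℂ] ((Fin n → ℤˣ) → ℂ)))
      (hα : ∀ i : Fin n, α (sGen Q i) = sGen Q i ⊗ₜ[ℂ] fun ε : Fin n → ℤˣ => ((ε i : ℤ) : ℂ)) :
      α = signCoaction hQ' :=
    algHom_ext_sGen fun i => (hα i).trans (signCoaction_sGen hQ' i).symm
  refine ⟨⟨signCoaction hQ', signCoaction_sGen hQ', hunique⟩, fun α hα => ?_⟩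
  obtain rfl := hunique α hα
  refine ⟨signCoaction_sSet hQ', signCoaction_injective hQ', fun x => ?_⟩
  rw [signCoaction_eq_tmul_one_iff, Algebra.mem_bot]
  exact exists_congr fun c => eq_comm
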